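/- arXiv:1408.5025 — 5 statements merged into one kernel-verified Lean document; each statement's English description precedes it below -/
import Mathlib

section
/- Suppose ξ and η are continuous and piecewise differentiable functions on [a,b] with ξ(a) ≥ η(a) and ξ(b) ≥ η(b), the discontinuities of ξ' and η' are discrete, the inequality ξ(κ) ≤ η(κ) has a solution in (a,b), and ξ, η are differentiable at every such solution. Then there exists κ₀ ∈ (a,b) with ξ(κ₀) ≤ η(κ₀) and ξ'(κ₀) = η'(κ₀). -/
open Real Set

/-! The difference `ξ - η` attains its minimum on `[a, b]`. That minimum is `≤ 0`, and if it is
attained only at an endpoint it equals `0`, so it is also attained at the interior solution of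
`ξ ≤ η`. Either way there is an interior minimiser, which solves `ξ ≤ η`; there both functions are
differentiable, so Fermat's theorem gives `ξ' = η'`. -/

theorem exists_mem_Ioo_isMinOn_Icc {f : ℝ → ℝ} {a b κ : ℝ} (hf : ContinuousOn f (Icc a b))
    (hκ : κ ∈ Ioo a b) (ha : f κ ≤ f a) (hb : f κ ≤ f b) :
    ∃ c ∈ Ioo a b, IsMinOn f (Icc a b) c := by
  obtain ⟨c, hc, hmin⟩ :=
    isCompact_Icc.exists_isMinOn ⟨κ, Ioo_subset_Icc_self hκ⟩ hf
  by_cases hc' : c ∈ Ioo a b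
  · exact ⟨c, hc', hmin⟩
  have hκc : f κ ≤ f c := by
    rcases eq_endpoints_or_mem_Ioo_of_mem_Icc hc with rfl | rfl | h
    exacts [ha, hb, absurd h hc']
  exact ⟨κ, hκ, fun x hx => hκc.trans (hmin hx)⟩

theorem key_proposition_general (a b : ℝ) (ξ η : ℝ → ℝ)
    (hξc : ContinuousOn ξ (Set.Icc a b)) (hηc : ContinuousOn η (Set.Icc a b))
    (ha : ξ a ≥ η a) (hb : ξ b ≥ η b)
    (hsol : ∃ κ ∈ Set.Ioo a b, ξ κ ≤ η κ)
    (hdiff : ∀ κ ∈ Set.Ioo a b, ξ κ ≤ η κ →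
      DifferentiableAt ℝ ξ κ ∧ DifferentiableAt ℝ η κ) :
    ∃ κ₀ ∈ Set.Ioo a b, ξ κ₀ ≤ η κ₀ ∧ deriv ξ κ₀ = deriv η κ₀ := by
  obtain ⟨κ, hκ, hκle⟩ := hsol
  obtain ⟨c, hc, hmin⟩ := exists_mem_Ioo_isMinOn_Icc (hξc.sub hηc) hκ
    (by simp only [Pi.sub_apply]; linarith) (by simp only [Pi.sub_apply]; linarith)
  have hcle : ξ c ≤ η c := by
    have : ξ c - η c ≤ ξ κ - η κ := hmin (Ioo_subset_Icc_self hκ)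
    linarith
  obtain ⟨hξ, hη⟩ := hdiff c hc hcle
  have hfermat : deriv (ξ - η) c = 0 :=
    (hmin.isLocalMin (Icc_mem_nhds hc.1 hc.2)).deriv_eq_zero
  rw [deriv_sub hξ hη] at hfermat
  exact ⟨c, hc, hcle, sub_eq_zero.1 hfermat⟩

/-- If ξ, η are continuous on [a,b], differentiable off finite (discrete) exceptional sets,
ξ(a) ≥ η(a), ξ(b) ≥ η(b), the inequality ξ ≤ η has a solution in (a,b), and ξ, η are
differentiable at every such solution, then there is κ₀ ∈ (a,b) with ξ(κ₀) ≤ η(κ₀)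
and ξ'(κ₀) = η'(κ₀). -/
theorem key_proposition (a b : ℝ) (hab : a < b) (ξ η : ℝ → ℝ)
    (hξc : ContinuousOn ξ (Set.Icc a b)) (hηc : ContinuousOn η (Set.Icc a b))
    (Sξ Sη : Finset ℝ)
    (hξd : ∀ x ∈ Set.Ioo a b, x ∉ Sξ → DifferentiableAt ℝ ξ x)
    (hηd : ∀ x ∈ Set.Ioo a b, x ∉ Sη → DifferentiableAt ℝ η x)
    (ha : ξ a ≥ η a) (hb : ξ b ≥ η b)
    (hsol : ∃ κ ∈ Set.Ioo a b, ξ κ ≤ η κ)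
    (hdiff : ∀ κ ∈ Set.Ioo a b, ξ κ ≤ η κ →
      DifferentiableAt ℝ ξ κ ∧ DifferentiableAt ℝ η κ) :
    ∃ κ₀ ∈ Set.Ioo a b, ξ κ₀ ≤ η κ₀ ∧ deriv ξ κ₀ = deriv η κ₀ :=
  key_proposition_general a b ξ η hξc hηc ha hb hsol hdiff
end

section
/- The function ĝ defined piecewise via arctan(4κ(κ²-1)/(κ⁴-6κ²+1)) with branch corrections 0, -π, -2π on the intervals [0, √2−1), (√2−1, √2+1), (√2+1, ∞) (and values -π/2, -3π/2 at κ = √2−1, √2+1) is differentiable on [0,∞) with ĝ'(κ) = -4/(κ²+1). -/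
/-!
On `[0, ∞)` the function `ĝ` is just `-4 arctan`: with `t = arctan κ` one has
`tan (4t) = 4κ(1 - κ²)/(κ⁴ - 6κ² + 1)`, and since `√2 - 1 = tan (π/8)` and `√2 + 1 = tan (3π/8)`,
the corrections `0, -π, -2π` are exactly the multiples of `π` that move `-4t ∈ (-2π, 0]`
into the range `(-π/2, π/2)` of `arctan`.
-/

open Real Set

noncomputable def ghat (κ : ℝ) : ℝ :=
  if κ < Real.sqrt 2 - 1 then
    Real.arctan (4 * κ * (κ^2 - 1) / (κ^4 - 6 * κ^2 + 1))
  else if κ = Real.sqrt 2 - 1 then -(π / 2)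
  else if κ < Real.sqrt 2 + 1 then
    -π + Real.arctan (4 * κ * (κ^2 - 1) / (κ^4 - 6 * κ^2 + 1))
  else if κ = Real.sqrt 2 + 1 then -(3 * π / 2)
  else -(2 * π) + Real.arctan (4 * κ * (κ^2 - 1) / (κ^4 - 6 * κ^2 + 1))

namespace Real

-- Both sides are `0` when `cos (4θ) = 0`, so no hypothesis on the denominator is needed.
theorem tan_four_mul_of_cos_ne_zero {θ : ℝ} (hc : cos θ ≠ 0) :
    tan (4 * θ) = 4 * tan θ * (1 - tan θ ^ 2) / (tan θ ^ 4 - 6 * tan θ ^ 2 + 1) := by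
  have hsin : sin (4 * θ) = 4 * sin θ * cos θ * (cos θ ^ 2 - sin θ ^ 2) := by
    rw [show 4 * θ = 2 * (2 * θ) by ring, sin_two_mul, sin_two_mul, cos_two_mul, sin_sq]
    ring
  have hcos : cos (4 * θ) = cos θ ^ 4 - 6 * sin θ ^ 2 * cos θ ^ 2 + sin θ ^ 4 := by
    rw [show 4 * θ = 2 * (2 * θ) by ring, cos_two_mul, cos_two_mul]
    linear_combination (7 * cos θ ^ 2 - sin θ ^ 2 - 1) * sin_sq_add_cos_sq θ
  have hsin_eq : sin θ = tan θ * cos θ := by rw [tan_eq_sin_div_cos, div_mul_cancel₀ _ hc]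
  rw [tan_eq_sin_div_cos (4 * θ), hsin, hcos, hsin_eq]
  conv_rhs => rw [← mul_div_mul_left _ _ (pow_ne_zero 4 hc)]
  congr 1 <;> ring

theorem tan_four_mul_arctan (x : ℝ) :
    tan (4 * arctan x) = 4 * x * (1 - x ^ 2) / (x ^ 4 - 6 * x ^ 2 + 1) := by
  rw [tan_four_mul_of_cos_ne_zero (cos_arctan_pos x).ne', tan_arctan]

theorem arctan_quartic_eq_int_mul_pi_sub {x : ℝ} (k : ℤ)
    (h₁ : -(π / 2) < k * π - 4 * arctan x) (h₂ : k * π - 4 * arctan x < π / 2) :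
    arctan (4 * x * (x ^ 2 - 1) / (x ^ 4 - 6 * x ^ 2 + 1)) = k * π - 4 * arctan x := by
  refine arctan_eq_of_tan_eq ?_ ⟨h₁, h₂⟩
  rw [tan_int_mul_pi_sub, tan_four_mul_arctan, ← neg_div]
  ring

theorem arctan_sqrt_two_sub_one : arctan (√2 - 1) = π / 8 := by
  have hsq : √2 ^ 2 = 2 := sq_sqrt zero_le_two
  have hgt : 1 < √2 := by nlinarith [sqrt_nonneg 2]
  have htwo : 2 * arctan (√2 - 1) = π / 4 := by
    rw [two_mul_arctan (by linarith) (by nlinarith), ← arctan_one]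
    congr 1
    rw [div_eq_one_iff_eq] <;> nlinarith
  linarith

theorem arctan_sqrt_two_add_one : arctan (√2 + 1) = 3 * π / 8 := by
  have hsq : √2 ^ 2 = 2 := sq_sqrt zero_le_two
  have hinv : √2 + 1 = (√2 - 1)⁻¹ :=
    (inv_eq_of_mul_eq_one_right (by linear_combination hsq)).symm
  rw [hinv, arctan_inv_of_pos (by nlinarith [sqrt_nonneg 2]), arctan_sqrt_two_sub_one]
  ring

end Real

theorem ghat_eq_neg_four_mul_arctan {x : ℝ} (hx : 0 ≤ x) : ghat x = -4 * arctan x := by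
  have hpi := pi_pos
  have hnonneg : 0 ≤ arctan x := arctan_nonneg.2 hx
  have hlt : arctan x < π / 2 := arctan_lt_pi_div_two x
  unfold ghat
  split_ifs with h₁ h₂ h₃ h₄
  · have hup : arctan x < π / 8 := arctan_sqrt_two_sub_one ▸ arctan_strictMono h₁
    rw [arctan_quartic_eq_int_mul_pi_sub 0 (by push_cast; linarith) (by push_cast; linarith)]
    push_cast
    ring
  · rw [h₂, arctan_sqrt_two_sub_one]
    ring
  · have hlow : π / 8 < arctan x :=
      arctan_sqrt_two_sub_one ▸ arctan_strictMono ((not_lt.1 h₁).lt_of_ne' h₂)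
    have hup : arctan x < 3 * π / 8 := arctan_sqrt_two_add_one ▸ arctan_strictMono h₃
    rw [arctan_quartic_eq_int_mul_pi_sub 1 (by push_cast; linarith) (by push_cast; linarith)]
    push_cast
    ring
  · rw [h₄, arctan_sqrt_two_add_one]
    ring
  · have hlow : 3 * π / 8 < arctan x :=
      arctan_sqrt_two_add_one ▸ arctan_strictMono ((not_lt.1 h₃).lt_of_ne' h₄)
    rw [arctan_quartic_eq_int_mul_pi_sub 2 (by push_cast; linarith) (by push_cast; linarith)]
    push_cast
    ring

/-- The piecewise function ĝ is differentiable on [0,∞) with ĝ'(κ) = -4/(κ²+1). -/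
theorem ghat_deriv (κ : ℝ) (hκ : 0 ≤ κ) :
    HasDerivWithinAt ghat (-4 / (κ^2 + 1)) (Set.Ici 0) κ := by
  have hderiv : HasDerivAt (fun x => -4 * arctan x) (-4 / (κ ^ 2 + 1)) κ :=
    ((hasDerivAt_arctan κ).const_mul (-4)).congr_deriv (by ring)
  exact hderiv.hasDerivWithinAt.congr (fun _ hx => ghat_eq_neg_four_mul_arctan hx)
    (ghat_eq_neg_four_mul_arctan hκ)
end

section
/- At every κ > 0 where ψ_L is differentiable, ψ_L'(κ) = ψ_L(κ)·{L - [sin g_L(κ)/√((2 - cos g_L(κ))² - 1)]·g_L'(κ)}, and consequently ψ_L'(κ) ≥ -ψ_L(κ)·4/(κ²+1). -/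
/-!
Write `u = 2 - cos g_L`. Since `d/du (u - √(u² - 1)) = -(u - √(u² - 1)) / √(u² - 1)`, the chain
rule gives the formula wherever `u > 1`, i.e. `cos g_L(κ) ≠ 1`; and there `ψ_L` is indeed not
differentiable, because `√(u² - 1) = |sin (g_L / 2)| · √(2 (3 - cos g_L))` has a corner where
`sin (g_L / 2)` vanishes with nonzero derivative `g_L' / 2 · cos (g_L / 2)`. The inequality follows
from `ψ_L ≥ 0`, `g_L' > 0` and `sin² θ ≤ (2 - cos θ)² - 1`, i.e. `0 ≤ 2 (1 - cos θ)²`.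
-/

open Real Filter Topology

lemma sub_sqrt_sq_sub_one_pos {t : ℝ} (ht : 1 ≤ t) : 0 < t - √(t ^ 2 - 1) := by
  have : √(t ^ 2 - 1) < √(t ^ 2) := sqrt_lt_sqrt (by nlinarith) (by linarith)
  rw [sqrt_sq (by linarith)] at this
  linarith

lemma hasDerivAt_sub_sqrt_sq_sub_one {t : ℝ} (ht : 1 < t) :
    HasDerivAt (fun t => t - √(t ^ 2 - 1)) (-(t - √(t ^ 2 - 1)) / √(t ^ 2 - 1)) t := by
  have hpos : 0 < t ^ 2 - 1 := by nlinarith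
  have hr : √(t ^ 2 - 1) ≠ 0 := (sqrt_pos.mpr hpos).ne'
  refine ((hasDerivAt_id' t).sub (((hasDerivAt_pow 2 t).sub_const 1).sqrt hpos.ne')).congr_deriv ?_
  field_simp
  push_cast
  ring

lemma sin_div_sqrt_two_sub_cos_sq_sub_one_le_one (θ : ℝ) :
    sin θ / √((2 - cos θ) ^ 2 - 1) ≤ 1 := by
  refine div_le_one_of_le₀ ((le_abs_self _).trans (abs_le_sqrt ?_)) (sqrt_nonneg _)
  nlinarith [sin_sq_add_cos_sq θ, sq_nonneg (1 - cos θ)]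

lemma sqrt_two_sub_cos_sq_sub_one (θ : ℝ) :
    √((2 - cos θ) ^ 2 - 1) = |sin (θ / 2)| * √(2 * (3 - cos θ)) := by
  have h : sin (θ / 2) ^ 2 = 1 / 2 - cos θ / 2 := by
    rw [sin_sq_eq_half_sub, mul_div_cancel₀ _ two_ne_zero]
  rw [← sqrt_sq_eq_abs, ← sqrt_mul (sq_nonneg _), h]
  congr 1
  ring

lemma eq_zero_of_hasDerivAt_of_differentiableAt_abs {φ : ℝ → ℝ} {m a : ℝ}
    (hφ : HasDerivAt φ m a) (h0 : φ a = 0) (hd : DifferentiableAt ℝ (fun x => |φ x|) a) :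
    m = 0 := by
  have hmin : IsLocalMin (fun x => |φ x|) a :=
    Eventually.of_forall fun x => by simp only [h0, abs_zero]; exact abs_nonneg _
  have hd0 : HasDerivAt (fun x => |φ x|) 0 a :=
    hmin.hasDerivAt_eq_zero hd.hasDerivAt ▸ hd.hasDerivAt
  have h1 := (hasDerivAt_iff_tendsto_slope.mp hd0).abs
  rw [abs_zero] at h1
  have h2 : Tendsto (fun y => |slope (fun x => |φ x|) a y|) (𝓝[≠] a) (𝓝 |m|) := by
    refine (hasDerivAt_iff_tendsto_slope.mp hφ).abs.congr fun y => ?_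
    simp only [slope_def_field, h0, sub_zero, abs_zero, abs_div, abs_abs]
  exact abs_eq_zero.mp (tendsto_nhds_unique h2 h1)

lemma not_differentiableAt_sqrt_two_sub_cos_sq_sub_one {θ : ℝ → ℝ} {θ' a : ℝ}
    (hθ : HasDerivAt θ θ' a) (hθ' : θ' ≠ 0) (hc : cos (θ a) = 1) :
    ¬ DifferentiableAt ℝ (fun x => √((2 - cos (θ x)) ^ 2 - 1)) a := by
  intro hd
  have hφ : HasDerivAt (fun x => sin (θ x / 2)) (cos (θ a / 2) * (θ' / 2)) a :=
    (hθ.div_const 2).sin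
  have hsin : sin (θ a / 2) = 0 := by
    have h := sin_sq_eq_half_sub (θ a / 2)
    rw [mul_div_cancel₀ _ two_ne_zero, hc] at h
    exact pow_eq_zero_iff two_ne_zero |>.mp (by linarith)
  have hcos : cos (θ a / 2) ≠ 0 := by
    intro h
    have := cos_sq_add_sin_sq (θ a / 2)
    simp [h, hsin] at this
  have hk_pos : ∀ x, 0 < 2 * (3 - cos (θ x)) := fun x => by linarith [cos_le_one (θ x)]
  have hk : DifferentiableAt ℝ (fun x => √(2 * (3 - cos (θ x)))) a :=
    ((hθ.differentiableAt.cos.const_sub 3).const_mul 2).sqrt (hk_pos a).ne'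
  have hk0 : ∀ x, √(2 * (3 - cos (θ x))) ≠ 0 := fun x => (sqrt_pos.mpr (hk_pos x)).ne'
  refine mul_ne_zero hcos (div_ne_zero hθ' two_ne_zero)
    (eq_zero_of_hasDerivAt_of_differentiableAt_abs hφ hsin ?_)
  refine (hd.div hk (hk0 a)).congr_of_eventuallyEq (Eventually.of_forall fun x => ?_)
  rw [Pi.div_apply, sqrt_two_sub_cos_sq_sub_one, mul_div_cancel_right₀ _ (hk0 x)]

lemma differentiableAt_of_differentiableAt_exp_mul {F : ℝ → ℝ} {L a : ℝ}
    (h : DifferentiableAt ℝ (fun x => exp (L * x) * F x) a) : DifferentiableAt ℝ F a := by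
  refine (((differentiableAt_id.const_mul L).neg.exp).mul h).congr_of_eventuallyEq
    (Eventually.of_forall fun x => ?_)
  simp [← mul_assoc, ← exp_add]

lemma hasDerivAt_exp_mul_sub_sqrt {θ : ℝ → ℝ} {θ' L a : ℝ}
    (hθ : HasDerivAt θ θ' a) (hc : cos (θ a) ≠ 1) :
    HasDerivAt (fun x => exp (L * x) * ((2 - cos (θ x)) - √((2 - cos (θ x)) ^ 2 - 1)))
      (exp (L * a) * ((2 - cos (θ a)) - √((2 - cos (θ a)) ^ 2 - 1)) *
        (L - sin (θ a) / √((2 - cos (θ a)) ^ 2 - 1) * θ')) a := by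
  have hu : 1 < 2 - cos (θ a) := by linarith [lt_of_le_of_ne (cos_le_one (θ a)) hc]
  have hf := (hasDerivAt_sub_sqrt_sq_sub_one hu).comp a (hθ.cos.const_sub 2)
  have he : HasDerivAt (fun x => exp (L * x)) (exp (L * a) * L) a := by
    simpa using ((hasDerivAt_id a).const_mul L).exp
  refine (he.mul hf).congr_deriv ?_
  simp only [Function.comp_apply]
  ring

lemma hasDerivAt_mul_add_four_arctan (L κ : ℝ) :
    HasDerivAt (fun x => L * x + 4 * arctan x) (L + 4 / (κ ^ 2 + 1)) κ := by
  refine (((hasDerivAt_id' κ).const_mul L).add ((hasDerivAt_arctan κ).const_mul 4)).congr_deriv ?_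
  rw [add_comm (κ ^ 2)]
  ring

theorem psi_deriv_formula_general (L : ℝ) (hL : 0 < L) (κ : ℝ)
    (hdiff : DifferentiableAt ℝ (fun x : ℝ => Real.exp (L * x) *
      ((2 - Real.cos (L * x + 4 * Real.arctan x)) -
        Real.sqrt ((2 - Real.cos (L * x + 4 * Real.arctan x))^2 - 1))) κ) :
    deriv (fun x : ℝ => Real.exp (L * x) *
        ((2 - Real.cos (L * x + 4 * Real.arctan x)) -
          Real.sqrt ((2 - Real.cos (L * x + 4 * Real.arctan x))^2 - 1))) κ =
      (Real.exp (L * κ) *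
        ((2 - Real.cos (L * κ + 4 * Real.arctan κ)) -
          Real.sqrt ((2 - Real.cos (L * κ + 4 * Real.arctan κ))^2 - 1))) *
      (L - Real.sin (L * κ + 4 * Real.arctan κ) /
          Real.sqrt ((2 - Real.cos (L * κ + 4 * Real.arctan κ))^2 - 1) *
          (L + 4 / (κ^2 + 1))) ∧
    deriv (fun x : ℝ => Real.exp (L * x) *
        ((2 - Real.cos (L * x + 4 * Real.arctan x)) -
          Real.sqrt ((2 - Real.cos (L * x + 4 * Real.arctan x))^2 - 1))) κ ≥
      -(Real.exp (L * κ) *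
        ((2 - Real.cos (L * κ + 4 * Real.arctan κ)) -
          Real.sqrt ((2 - Real.cos (L * κ + 4 * Real.arctan κ))^2 - 1))) *
        (4 / (κ^2 + 1)) := by
  have hg := hasDerivAt_mul_add_four_arctan L κ
  have hg' : 0 < L + 4 / (κ ^ 2 + 1) := by positivity
  have hc : cos (L * κ + 4 * arctan κ) ≠ 1 := fun hc =>
    not_differentiableAt_sqrt_two_sub_cos_sq_sub_one hg hg'.ne' hc <|
      ((hg.differentiableAt.cos.const_sub 2).sub
        (differentiableAt_of_differentiableAt_exp_mul hdiff)).congr_of_eventuallyEq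
        (Eventually.of_forall fun x => by simp)
  have hψ := (hasDerivAt_exp_mul_sub_sqrt (L := L) hg hc).deriv
  refine ⟨hψ, ?_⟩
  have hψ_nonneg : 0 ≤ exp (L * κ) * ((2 - cos (L * κ + 4 * arctan κ)) -
      √((2 - cos (L * κ + 4 * arctan κ)) ^ 2 - 1)) :=
    mul_nonneg (exp_pos _).le
      (sub_sqrt_sq_sub_one_pos (by linarith [cos_le_one (L * κ + 4 * arctan κ)])).le
  rw [hψ, ge_iff_le, neg_mul, neg_le, ← mul_neg]
  refine mul_le_mul_of_nonneg_left ?_ hψ_nonneg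
  have := mul_le_mul_of_nonneg_right
    (sin_div_sqrt_two_sub_cos_sq_sub_one_le_one (L * κ + 4 * arctan κ)) hg'.le
  linarith

/-- At every κ > 0 where ψ_L is differentiable,
ψ_L'(κ) = ψ_L(κ)·{L - [sin g_L(κ)/√((2-cos g_L(κ))²-1)]·g_L'(κ)}, and consequently
ψ_L'(κ) ≥ -ψ_L(κ)·4/(κ²+1). -/
theorem psi_deriv_formula (L : ℝ) (hL : 0 < L) (κ : ℝ) (hκ : 0 < κ)
    (hdiff : DifferentiableAt ℝ (fun x : ℝ => Real.exp (L * x) *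
      ((2 - Real.cos (L * x + 4 * Real.arctan x)) -
        Real.sqrt ((2 - Real.cos (L * x + 4 * Real.arctan x))^2 - 1))) κ) :
    deriv (fun x : ℝ => Real.exp (L * x) *
        ((2 - Real.cos (L * x + 4 * Real.arctan x)) -
          Real.sqrt ((2 - Real.cos (L * x + 4 * Real.arctan x))^2 - 1))) κ =
      (Real.exp (L * κ) *
        ((2 - Real.cos (L * κ + 4 * Real.arctan κ)) -
          Real.sqrt ((2 - Real.cos (L * κ + 4 * Real.arctan κ))^2 - 1))) *
      (L - Real.sin (L * κ + 4 * Real.arctan κ) /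
          Real.sqrt ((2 - Real.cos (L * κ + 4 * Real.arctan κ))^2 - 1) *
          (L + 4 / (κ^2 + 1))) ∧
    deriv (fun x : ℝ => Real.exp (L * x) *
        ((2 - Real.cos (L * x + 4 * Real.arctan x)) -
          Real.sqrt ((2 - Real.cos (L * x + 4 * Real.arctan x))^2 - 1))) κ ≥
      -(Real.exp (L * κ) *
        ((2 - Real.cos (L * κ + 4 * Real.arctan κ)) -
          Real.sqrt ((2 - Real.cos (L * κ + 4 * Real.arctan κ))^2 - 1))) *
        (4 / (κ^2 + 1)) :=
  psi_deriv_formula_general L hL κ hdiff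
end

section
/- For fixed κ > 0, the function L ↦ ψ_L(κ) = e^{Lκ} f(cos g_L(κ)) is monotonically increasing in L, since ∂ψ_L(κ)/∂L = κ·ψ_L(κ)·{1 - sin g_L(κ)/√((2 - cos g_L(κ))² - 1)} ≥ 0 wherever defined. -/
open Real Set Filter Topology

/-!
Write `θ = Lκ + a` with `a = 4 arctan κ` and `w = 2 - cos θ ≥ 1`. Differentiating
`e^{Lκ} (w - √(w² - 1))` in `L` gives `κ ψ (1 - sin θ / √(w² - 1))`, which is nonnegative
because `w² - 1 = (1 - cos θ)(3 - cos θ) ≥ sin² θ`. The only obstruction is the kink of the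
square root where `cos θ = 1`. Replacing `w² - 1` by `w² - 1 + ε` removes it: for `0 < ε ≤ 1`
the same computation shows the smoothed function is monotone, and monotonicity survives the
pointwise limit `ε → 0⁺`. At a kink `ψ` is not differentiable at all, since `√(w² - 1)` is
squeezed between `± sin θ`, whose slopes `± κ` differ.
-/

/-- `ψ_L(κ)` is `psiε κ (4 * arctan κ) 0 L`; `ε > 0` smooths the square root. -/
noncomputable def psiε (κ a ε L : ℝ) : ℝ :=
  exp (L * κ) * ((2 - cos (L * κ + a)) - √((2 - cos (L * κ + a)) ^ 2 - 1 + ε))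

noncomputable def psiεDeriv (κ a ε L : ℝ) : ℝ :=
  κ * psiε κ a ε L * (1 - sin (L * κ + a) / √((2 - cos (L * κ + a)) ^ 2 - 1 + ε))

lemma abs_sin_le_sqrt_two_sub_cos_sq_sub_one_add (θ : ℝ) {ε : ℝ} (hε : 0 ≤ ε) :
    |sin θ| ≤ √((2 - cos θ) ^ 2 - 1 + ε) :=
  abs_le_sqrt (by nlinarith [sin_sq_add_cos_sq θ, cos_le_one θ])

lemma sqrt_two_sub_cos_sq_sub_one_add_le (θ : ℝ) {ε : ℝ} (hε : ε ≤ 1) :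
    √((2 - cos θ) ^ 2 - 1 + ε) ≤ 2 - cos θ :=
  sqrt_le_iff.2 ⟨by linarith [cos_le_one θ], by linarith⟩

lemma hasDerivAt_psiε (κ a ε L : ℝ) (hpos : 0 < (2 - cos (L * κ + a)) ^ 2 - 1 + ε) :
    HasDerivAt (psiε κ a ε) (psiεDeriv κ a ε L) L := by
  have hw : HasDerivAt (fun L : ℝ => 2 - cos (L * κ + a)) (sin (L * κ + a) * κ) L := by
    simpa using (((hasDerivAt_mul_const κ).add_const a).cos).const_sub 2
  have hs : HasDerivAt (fun L => √((2 - cos (L * κ + a)) ^ 2 - 1 + ε))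
      (2 * (2 - cos (L * κ + a)) * (sin (L * κ + a) * κ) /
        (2 * √((2 - cos (L * κ + a)) ^ 2 - 1 + ε))) L := by
    simpa using (((hw.fun_pow 2).sub_const 1).add_const ε).sqrt hpos.ne'
  refine ((hasDerivAt_mul_const κ).exp.mul (hw.sub hs)).congr_deriv ?_
  have : 0 < √((2 - cos (L * κ + a)) ^ 2 - 1 + ε) := sqrt_pos.2 hpos
  simp only [psiεDeriv, psiε, Pi.sub_apply]
  field_simp
  ring

lemma psiεDeriv_nonneg {κ ε : ℝ} (a L : ℝ) (hκ : 0 ≤ κ) (hε₀ : 0 ≤ ε) (hε₁ : ε ≤ 1) :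
    0 ≤ psiεDeriv κ a ε L := by
  set θ := L * κ + a
  have hsin : sin θ ≤ √((2 - cos θ) ^ 2 - 1 + ε) :=
    (le_abs_self _).trans (abs_sin_le_sqrt_two_sub_cos_sq_sub_one_add θ hε₀)
  have hpsi : 0 ≤ psiε κ a ε L :=
    mul_nonneg (exp_pos _).le (sub_nonneg.2 (sqrt_two_sub_cos_sq_sub_one_add_le θ hε₁))
  exact mul_nonneg (mul_nonneg hκ hpsi) (sub_nonneg.2 (div_le_one_of_le₀ hsin (sqrt_nonneg _)))

lemma monotone_psiε {κ ε : ℝ} (a : ℝ) (hκ : 0 ≤ κ) (hε₀ : 0 < ε) (hε₁ : ε ≤ 1) :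
    Monotone (psiε κ a ε) := by
  have hpos (L : ℝ) : 0 < (2 - cos (L * κ + a)) ^ 2 - 1 + ε := by
    nlinarith [cos_le_one (L * κ + a)]
  refine monotone_of_deriv_nonneg (fun L => (hasDerivAt_psiε κ a ε L (hpos L)).differentiableAt)
    fun L => ?_
  rw [(hasDerivAt_psiε κ a ε L (hpos L)).deriv]
  exact psiεDeriv_nonneg a L hκ hε₀.le hε₁

lemma monotone_psiε_zero {κ : ℝ} (a : ℝ) (hκ : 0 ≤ κ) : Monotone (psiε κ a 0) := by
  intro x y hxy
  have hcont (L : ℝ) : Tendsto (fun ε => psiε κ a ε L) (𝓝[>] 0) (𝓝 (psiε κ a 0 L)) :=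
    (Continuous.tendsto (by unfold psiε; fun_prop) 0).mono_left nhdsWithin_le_nhds
  refine le_of_tendsto_of_tendsto (hcont x) (hcont y) ?_
  filter_upwards [Ioc_mem_nhdsGT one_pos] with ε hε
  exact monotone_psiε a hκ hε.1 hε.2 hxy

lemma not_differentiableAt_of_abs_le {r g : ℝ → ℝ} {g' x : ℝ} (hgr : ∀ z, |g z| ≤ r z)
    (hrx : r x = 0) (hg : HasDerivAt g g' x) (hg' : g' ≠ 0) : ¬ DifferentiableAt ℝ r x := by
  intro hr
  have hgx : g x = 0 := abs_nonpos_iff.1 (hrx ▸ hgr x)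
  have hsub : IsLocalMin (r - g) x := Eventually.of_forall fun z => by
    simp only [Pi.sub_apply, hrx, hgx, sub_zero]
    linarith [neg_abs_le (g z), le_abs_self (g z), hgr z]
  have hadd : IsLocalMin (r + g) x := Eventually.of_forall fun z => by
    simp only [Pi.add_apply, hrx, hgx, add_zero]
    linarith [neg_abs_le (g z), le_abs_self (g z), hgr z]
  have h₁ := hsub.hasDerivAt_eq_zero (hr.hasDerivAt.sub hg)
  have h₂ := hadd.hasDerivAt_eq_zero (hr.hasDerivAt.add hg)
  exact hg' (by linarith)

lemma not_differentiableAt_psiε_zero {κ L : ℝ} (a : ℝ) (hκ : κ ≠ 0) (hcos : cos (L * κ + a) = 1) :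
    ¬ DifferentiableAt ℝ (psiε κ a 0) L := by
  intro hψ
  have hr : (fun z => √((2 - cos (z * κ + a)) ^ 2 - 1 + 0)) =
      fun z => (2 - cos (z * κ + a)) - exp (-(z * κ)) * psiε κ a 0 z := by
    ext z
    simp only [psiε, ← mul_assoc, ← exp_add, neg_add_cancel, exp_zero, one_mul, sub_sub_cancel]
  have hsin : HasDerivAt (fun z => sin (z * κ + a)) κ L := by
    simpa [hcos] using ((hasDerivAt_mul_const (x := L) κ).add_const a).sin
  refine not_differentiableAt_of_abs_le (fun z => abs_sin_le_sqrt_two_sub_cos_sq_sub_one_add _ le_rfl)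
    (by norm_num [hcos]) hsin hκ ?_
  rw [hr]
  fun_prop

/-- For fixed κ > 0, L ↦ ψ_L(κ) is monotonically increasing on (0,∞), and wherever it
is differentiable its derivative equals
κ·ψ_L(κ)·{1 - sin g_L(κ)/√((2-cos g_L(κ))²-1)} ≥ 0. -/
theorem psi_monotone_in_L (κ : ℝ) (hκ : 0 < κ) :
    MonotoneOn (fun L : ℝ => Real.exp (L * κ) *
      ((2 - Real.cos (L * κ + 4 * Real.arctan κ)) -
        Real.sqrt ((2 - Real.cos (L * κ + 4 * Real.arctan κ))^2 - 1)))
      (Set.Ioi 0) ∧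
    ∀ L ∈ Set.Ioi (0:ℝ),
      DifferentiableAt ℝ (fun L : ℝ => Real.exp (L * κ) *
        ((2 - Real.cos (L * κ + 4 * Real.arctan κ)) -
          Real.sqrt ((2 - Real.cos (L * κ + 4 * Real.arctan κ))^2 - 1))) L →
      deriv (fun L : ℝ => Real.exp (L * κ) *
        ((2 - Real.cos (L * κ + 4 * Real.arctan κ)) -
          Real.sqrt ((2 - Real.cos (L * κ + 4 * Real.arctan κ))^2 - 1))) L =
        κ * (Real.exp (L * κ) *
          ((2 - Real.cos (L * κ + 4 * Real.arctan κ)) -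
            Real.sqrt ((2 - Real.cos (L * κ + 4 * Real.arctan κ))^2 - 1))) *
          (1 - Real.sin (L * κ + 4 * Real.arctan κ) /
            Real.sqrt ((2 - Real.cos (L * κ + 4 * Real.arctan κ))^2 - 1)) ∧
      0 ≤ deriv (fun L : ℝ => Real.exp (L * κ) *
        ((2 - Real.cos (L * κ + 4 * Real.arctan κ)) -
          Real.sqrt ((2 - Real.cos (L * κ + 4 * Real.arctan κ))^2 - 1))) L := by
  set a := 4 * arctan κ
  have hψ : (fun L : ℝ => exp (L * κ) *
      ((2 - cos (L * κ + a)) - √((2 - cos (L * κ + a)) ^ 2 - 1))) = psiε κ a 0 := by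
    ext L
    simp only [psiε, add_zero]
  rw [hψ]
  refine ⟨(monotone_psiε_zero a hκ.le).monotoneOn _, fun L _ hdiff => ?_⟩
  have hcos : cos (L * κ + a) < 1 :=
    (cos_le_one _).lt_of_ne fun hcos => not_differentiableAt_psiε_zero a hκ.ne' hcos hdiff
  have hderiv := (hasDerivAt_psiε κ a 0 L (by nlinarith)).deriv
  refine ⟨?_, hderiv ▸ psiεDeriv_nonneg a L hκ.le le_rfl zero_le_one⟩
  rw [hderiv]
  simp only [psiεDeriv, psiε, add_zero]
end

section
/- For all t ∈ (3π/2, 2π): (2 - cos t) - √((2 - cos t)² - 1) > (3 - cos t - 2√2·√(1 - cos t))/(1 + cos t). Equivalently, with c = cos t ∈ (0,1), (1-c)^{3/2} + (1+c)√(3-c) < 2√2. -/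
/-!
With `s = 1 - c` the inequality reads `s^{3/2} + (2 - s)√(2 + s) < 2√2`. Squaring
`(2 - s)√(2 + s) < 2√2 - s^{3/2}` and cancelling, it becomes `2√2·√s < 2 + s`, which is AM-GM
for `2` and `s`, strict because `s ≠ 2`. The trigonometric inequality is this one multiplied by
`√(1 - c)`, since `(2 - c)² - 1 = (1 - c)(3 - c)`.
-/

open Real Set

lemma Real.rpow_three_halves {x : ℝ} (hx : 0 ≤ x) : x ^ ((3 : ℝ) / 2) = x * √x := by
  rw [show (3 : ℝ) / 2 = 1 + 1 / 2 by norm_num, rpow_add' hx (by norm_num), rpow_one,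
    sqrt_eq_rpow]

lemma Real.cos_mem_Ioo_zero_one {t : ℝ} (ht : t ∈ Ioo (3 * π / 2) (2 * π)) :
    cos t ∈ Ioo 0 1 := by
  obtain ⟨ht₁, ht₂⟩ := ht
  rw [← cos_sub_two_pi]
  refine ⟨cos_pos_of_mem_Ioo ⟨by linarith, by linarith⟩, ?_⟩
  rw [← cos_neg, ← cos_zero]
  exact cos_lt_cos_of_nonneg_of_le_pi le_rfl (by linarith [pi_pos]) (by linarith)

lemma mul_sqrt_add_mul_sqrt_lt {c : ℝ} (hc₀ : -1 < c) (hc₁ : c < 1) :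
    (1 - c) * √(1 - c) + (1 + c) * √(3 - c) < 2 * √2 := by
  set x := √(1 - c)
  have hx : x ^ 2 = 1 - c := sq_sqrt (by linarith)
  have hx₀ : 0 < x := sqrt_pos.2 (by linarith)
  have hw : √2 ^ 2 = 2 := sq_sqrt zero_le_two
  have hx_lt : x < √2 := sqrt_lt_sqrt (by linarith) (by linarith)
  have hamgm : 2 * √2 * x < 2 + x ^ 2 := by nlinarith [mul_pos hx₀ (sub_pos.2 hx_lt)]
  have hrhs : 0 ≤ 2 * √2 - (1 - c) * x := by nlinarith
  suffices ((1 + c) * √(3 - c)) ^ 2 < (2 * √2 - (1 - c) * x) ^ 2 by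
    linarith [lt_of_pow_lt_pow_left₀ 2 hrhs this]
  rw [mul_pow, sq_sqrt (by linarith)]
  nlinarith [mul_pos (mul_pos hx₀ hx₀) (sub_pos.2 hamgm)]

/-- For t ∈ (3π/2, 2π):
(2-cos t) - √((2-cos t)²-1) > (3 - cos t - 2√2·√(1-cos t))/(1+cos t); equivalently,
with c = cos t ∈ (0,1), (1-c)^{3/2} + (1+c)√(3-c) < 2√2. -/
theorem f_gt_q_on_interval :
    (∀ t ∈ Set.Ioo (3 * π / 2) (2 * π),
      (2 - Real.cos t) - Real.sqrt ((2 - Real.cos t)^2 - 1) >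
        (3 - Real.cos t - 2 * Real.sqrt 2 * Real.sqrt (1 - Real.cos t)) /
          (1 + Real.cos t)) ∧
    ∀ c ∈ Set.Ioo (0:ℝ) 1,
      (1 - c) ^ ((3:ℝ)/2) + (1 + c) * Real.sqrt (3 - c) < 2 * Real.sqrt 2 := by
  refine ⟨fun t ht ↦ ?_, fun c ⟨hc₀, hc₁⟩ ↦ ?_⟩
  · obtain ⟨hc₀, hc₁⟩ := cos_mem_Ioo_zero_one ht
    set c := cos t
    have hkey := mul_sqrt_add_mul_sqrt_lt (by linarith) hc₁
    have hu₀ : 0 < √(1 - c) := sqrt_pos.2 (by linarith)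
    have hu : √(1 - c) ^ 2 = 1 - c := sq_sqrt (by linarith)
    rw [show (2 - c) ^ 2 - 1 = (1 - c) * (3 - c) by ring, sqrt_mul (by linarith), gt_iff_lt,
      div_lt_iff₀ (by linarith)]
    nlinarith [mul_lt_mul_of_pos_right hkey hu₀]
  · rw [rpow_three_halves (by linarith)]
    exact mul_sqrt_add_mul_sqrt_lt (by linarith) hc₁
end
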